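/- arXiv:2512.23179 — 2 statements merged into one kernel-verified Lean document; each statement's English description precedes it below -/
import Mathlib

section
/- The density f(x) = (1/π)·K₀(|x|) (for x ≠ 0) of the product of two independent standard normals is not log-concave on ℝ: there exist points x, y > 0 and λ ∈ (0,1) with f(λx + (1−λ)y) < f(x)^λ · f(y)^(1−λ). -/
/-!
$K_0$ has a logarithmic singularity at the origin: restricting the integral to $[0, T]$ gives
$K_0(1/\cosh T) \ge T/e$, so $K_0$ is unbounded near $0$, while $K_0 \le 1$ on $[1, \infty)$.
Taking $y = 2$, $\lambda = 1/2$ and $x > 0$ with $K_0(x) K_0(2) > 1$, the midpoint lies in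
$[1, \infty)$, so $f$ there is at most $1/\pi < \sqrt{f(x) f(2)}$.
-/

open MeasureTheory

/-- Modified Bessel function of the second kind of order zero. -/
noncomputable def K0 (x : ℝ) : ℝ := ∫ t in Set.Ioi (0 : ℝ), Real.exp (-x * Real.cosh t)

open Real

lemma Real.self_lt_cosh (t : ℝ) : t < cosh t := by
  rcases le_or_gt 0 t with ht | ht
  · exact (self_le_sinh_iff.2 ht).trans_lt (sinh_lt_cosh t)
  · exact ht.trans (cosh_pos t)

lemma integrableOn_K0_integrand {r : ℝ} (hr : 0 < r) :
    IntegrableOn (fun t ↦ exp (-r * cosh t)) (Set.Ioi 0) := by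
  refine (exp_neg_integrableOn_Ioi 0 hr).mono' (by fun_prop) (Filter.Eventually.of_forall ?_)
  intro t
  rw [norm_of_nonneg (exp_pos _).le, exp_le_exp, neg_mul, neg_mul, neg_le_neg_iff]
  exact mul_le_mul_of_nonneg_left (self_lt_cosh t).le hr.le

lemma K0_le_one {r : ℝ} (hr : 1 ≤ r) : K0 r ≤ 1 := by
  rw [K0, ← integral_exp_neg_Ioi_zero]
  refine setIntegral_mono_on (integrableOn_K0_integrand (by linarith))
    (integrableOn_exp_neg_Ioi 0) measurableSet_Ioi fun t _ ↦ ?_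
  rw [exp_le_exp, neg_mul, neg_le_neg_iff]
  exact (self_lt_cosh t).le.trans (le_mul_of_one_le_left (cosh_pos t).le hr)

lemma mul_exp_neg_mul_cosh_le_K0 {r T : ℝ} (hr : 0 < r) (hT : 0 ≤ T) :
    T * exp (-r * cosh T) ≤ K0 r := by
  have hsub : Set.Ioc 0 T ⊆ Set.Ioi (0 : ℝ) := Set.Ioc_subset_Ioi_self
  calc T * exp (-r * cosh T) = ∫ _ in Set.Ioc 0 T, exp (-r * cosh T) := by
        rw [setIntegral_const, smul_eq_mul, measureReal_def, volume_Ioc, sub_zero,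
          ENNReal.toReal_ofReal hT]
    _ ≤ ∫ t in Set.Ioc 0 T, exp (-r * cosh t) := by
        refine setIntegral_mono_on (integrableOn_const measure_Ioc_lt_top.ne)
          ((integrableOn_K0_integrand hr).mono_set hsub) measurableSet_Ioc fun t ht ↦ ?_
        have hcosh : cosh t ≤ cosh T := by
          rw [cosh_le_cosh, abs_of_pos ht.1, abs_of_nonneg hT]
          exact ht.2
        rw [exp_le_exp, neg_mul, neg_mul, neg_le_neg_iff]
        exact mul_le_mul_of_nonneg_left hcosh hr.le
    _ ≤ K0 r := setIntegral_mono_set (integrableOn_K0_integrand hr)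
        (Filter.Eventually.of_forall fun _ ↦ (exp_pos _).le) hsub.eventuallyLE

lemma K0_pos {r : ℝ} (hr : 0 < r) : 0 < K0 r :=
  (one_mul (exp _) ▸ exp_pos _).trans_le (mul_exp_neg_mul_cosh_le_K0 hr zero_le_one)

lemma exists_lt_K0 (M : ℝ) : ∃ r, 0 < r ∧ M < K0 r := by
  set T := exp 1 * (|M| + 1)
  have hT : 0 ≤ T := by positivity
  refine ⟨(cosh T)⁻¹, inv_pos.2 (cosh_pos T), ?_⟩
  calc M < |M| + 1 := by linarith [le_abs_self M]
    _ = T * exp (-(cosh T)⁻¹ * cosh T) := by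
        rw [neg_mul, inv_mul_cancel₀ (cosh_pos T).ne', exp_neg]
        field_simp
        exact mul_comm _ _
    _ ≤ K0 (cosh T)⁻¹ := mul_exp_neg_mul_cosh_le_K0 (inv_pos.2 (cosh_pos T)) hT

lemma lt_rpow_half_mul_rpow_half_of_sq_lt {a b c : ℝ} (ha : 0 ≤ a) (hb : 0 ≤ b)
    (h : c ^ 2 < a * b) : c < a ^ (1 / 2 : ℝ) * b ^ (1 / 2 : ℝ) := by
  rw [← mul_rpow ha hb, ← sqrt_eq_rpow]
  exact lt_sqrt_of_sq_lt h

theorem K0_density_not_logConcave :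
    ∃ x y l : ℝ, 0 < x ∧ 0 < y ∧ 0 < l ∧ l < 1 ∧
      (1 / Real.pi) * K0 |l * x + (1 - l) * y| <
        Real.rpow ((1 / Real.pi) * K0 |x|) l * Real.rpow ((1 / Real.pi) * K0 |y|) (1 - l) := by
  have hK2 : 0 < K0 2 := K0_pos two_pos
  obtain ⟨x, hx, hKx⟩ := exists_lt_K0 (1 / K0 2)
  refine ⟨x, 2, 1 / 2, hx, two_pos, one_half_pos, one_half_lt_one, ?_⟩
  have hm : 1 ≤ |1 / 2 * x + (1 - 1 / 2) * 2| := by rw [abs_of_pos (by positivity)]; linarith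
  set m := |1 / 2 * x + (1 - 1 / 2) * 2|
  have hKm : K0 m ^ 2 ≤ 1 := pow_le_one₀ (K0_pos (by linarith)).le (K0_le_one hm)
  rw [abs_of_pos hx, abs_two, show (1 : ℝ) - 1 / 2 = 1 / 2 by norm_num]
  refine lt_rpow_half_mul_rpow_half_of_sq_lt (mul_nonneg (by positivity) (K0_pos hx).le)
    (mul_nonneg (by positivity) hK2.le) ?_
  calc (1 / π * K0 m) ^ 2 = (1 / π) ^ 2 * K0 m ^ 2 := mul_pow _ _ _
    _ < (1 / π) ^ 2 * (K0 x * K0 2) := by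
        gcongr
        exact hKm.trans_lt ((div_lt_iff₀ hK2).1 hKx)
    _ = 1 / π * K0 x * (1 / π * K0 2) := by ring
end

section
/- The convolution of two log-concave integrable functions on ℝ is log-concave: if f, g : ℝ → ℝ≥0 are log-concave and integrable, then (f ∗ g)(x) = ∫ f(x−y)g(y) dy is log-concave. -/
/-!
In dimension one, Brunn–Minkowski `|A| + |B| ≤ |A + B|` holds because suitable translates of
compact `A` and `B` lie in `A + B` and meet in a single point. Applied to the superlevel sets of
`f` and `g`, after rescaling them to a common supremum, it gives through the layer-cake formula
the Prékopa–Leindler inequality `(∫ f) ^ l * (∫ g) ^ (1 - l) ≤ ∫ h` whenever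
`f x ^ l * g y ^ (1 - l) ≤ h (l * x + (1 - l) * y)`. Since `(x, w) ↦ f (x - w) * g w` is jointly
log-concave, its sections at `x`, `y` and `l * x + (1 - l) * y` satisfy this hypothesis; they are
integrable because an integrable log-concave function is bounded.
-/

open MeasureTheory

/-- `f` is log-concave: `f (λx + (1-λ)y) ≥ f x ^ λ * f y ^ (1-λ)`. -/
def IsLogConcave (f : ℝ → ℝ) : Prop :=
  ∀ x y l : ℝ, 0 ≤ l → l ≤ 1 →
    Real.rpow (f x) l * Real.rpow (f y) (1 - l) ≤ f (l * x + (1 - l) * y)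

open Set
open scoped ENNReal Pointwise

theorem lintegral_ofReal_eq_setLIntegral_Ioo_meas_lt {α : Type*} [MeasurableSpace α]
    {μ : Measure α} {f : α → ℝ} {M : ℝ} (hf₀ : 0 ≤ᵐ[μ] f) (hf : AEMeasurable f μ)
    (hfM : ∀ x, f x ≤ M) :
    ∫⁻ x, ENNReal.ofReal (f x) ∂μ = ∫⁻ t in Ioo 0 M, μ {x | t < f x} := by
  rw [lintegral_eq_lintegral_meas_lt μ hf₀ hf]
  refine le_antisymm ?_ (lintegral_mono_set Ioo_subset_Ioi_self)
  have htail : ∫⁻ t in Ici M, μ {x | t < f x} = 0 :=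
    setLIntegral_eq_zero measurableSet_Ici fun t (ht : M ≤ t) =>
      measure_mono_null (fun x (hx : t < f x) => ((hfM x).trans ht).not_gt hx) measure_empty
  calc ∫⁻ t in Ioi 0, μ {x | t < f x}
      ≤ ∫⁻ t in Ioo 0 M ∪ Ici M, μ {x | t < f x} :=
        lintegral_mono_set fun t ht => (lt_or_ge t M).imp (fun htM => ⟨ht, htM⟩) id
    _ ≤ (∫⁻ t in Ioo 0 M, μ {x | t < f x}) + ∫⁻ t in Ici M, μ {x | t < f x} :=
        lintegral_union_le _ _ _
    _ = ∫⁻ t in Ioo 0 M, μ {x | t < f x} := by rw [htail]; exact add_zero _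

theorem IsLUB.range_const_mul {φ : ℝ → ℝ} {c M : ℝ} (hc : 0 ≤ c) (hM : IsLUB (range φ) M) :
    IsLUB (range fun x => c * φ x) (c * M) := by
  simpa only [← range_comp, Function.comp_def] using hM.mul_left hc

namespace Real

theorem brunnMinkowski_of_isCompact {K L : Set ℝ} (hK : IsCompact K) (hL : IsCompact L)
    (hK₀ : K.Nonempty) (hL₀ : L.Nonempty) : volume K + volume L ≤ volume (K + L) := by
  set a := sSup K
  set b := sInf L
  have hKL : (b +ᵥ K) ∪ (a +ᵥ L) ⊆ K + L :=
    union_subset ((vadd_set_subset_add (hL.sInf_mem hL₀)).trans_eq (add_comm L K))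
      (vadd_set_subset_add (hK.sSup_mem hK₀))
  have hinter : (b +ᵥ K) ∩ (a +ᵥ L) ⊆ {a + b} := by
    rintro _ ⟨⟨k, hk, rfl⟩, ⟨l, hl, hkl⟩⟩
    have hka : k ≤ a := le_csSup hK.bddAbove hk
    have hbl : b ≤ l := csInf_le hL.bddBelow hl
    simp only [vadd_eq_add] at hkl ⊢
    exact mem_singleton_of_eq (by linarith)
  calc volume K + volume L = volume (b +ᵥ K) + volume (a +ᵥ L) := by
        rw [measure_vadd, measure_vadd]
    _ = volume ((b +ᵥ K) ∪ (a +ᵥ L)) + volume ((b +ᵥ K) ∩ (a +ᵥ L)) :=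
        (measure_union_add_inter _ (hL.vadd a).isClosed.measurableSet).symm
    _ ≤ volume (K + L) + volume ({a + b} : Set ℝ) := by gcongr
    _ = volume (K + L) := by rw [measure_singleton, add_zero]

theorem volume_eq_iSup_isCompact_nonempty {A : Set ℝ} (hA : NullMeasurableSet A)
    (hA₀ : A.Nonempty) :
    volume A = ⨆ K : {K : Set ℝ // K ⊆ A ∧ IsCompact K ∧ K.Nonempty}, volume K.1 := by
  obtain ⟨a, ha⟩ := hA₀
  obtain ⟨A', hA'A, hA', hA'_ae⟩ := hA.exists_measurable_subset_ae_eq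
  refine le_antisymm ?_ (iSup_le fun K => measure_mono K.2.1)
  rw [← measure_congr hA'_ae, hA'.measure_eq_iSup_isCompact]
  refine iSup₂_le fun K hKA' => iSup_le fun hK => ?_
  exact le_iSup_of_le ⟨insert a K, insert_subset ha (hKA'.trans hA'A), hK.insert a,
    insert_nonempty a K⟩ (measure_mono (subset_insert a K))

theorem brunnMinkowski_smul_add_smul {A B : Set ℝ} {l : ℝ} (hl₀ : 0 ≤ l) (hl₁ : l ≤ 1)
    (hA : NullMeasurableSet A) (hB : NullMeasurableSet B)
    (hA₀ : A.Nonempty) (hB₀ : B.Nonempty) :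
    ENNReal.ofReal l * volume A + ENNReal.ofReal (1 - l) * volume B
      ≤ volume (l • A + (1 - l) • B) := by
  have : Nonempty {K : Set ℝ // K ⊆ A ∧ IsCompact K ∧ K.Nonempty} :=
    ⟨⟨{hA₀.some}, singleton_subset_iff.2 hA₀.some_mem, isCompact_singleton,
      singleton_nonempty _⟩⟩
  have : Nonempty {L : Set ℝ // L ⊆ B ∧ IsCompact L ∧ L.Nonempty} :=
    ⟨⟨{hB₀.some}, singleton_subset_iff.2 hB₀.some_mem, isCompact_singleton,
      singleton_nonempty _⟩⟩
  have volume_smul : ∀ {r : ℝ} (S : Set ℝ), 0 ≤ r →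
      volume (r • S) = ENNReal.ofReal r * volume S :=
    fun S hr => by simp [Measure.addHaar_smul_of_nonneg volume hr S]
  rw [volume_eq_iSup_isCompact_nonempty hA hA₀, volume_eq_iSup_isCompact_nonempty hB hB₀,
    ENNReal.mul_iSup, ENNReal.mul_iSup]
  refine ENNReal.iSup_add_iSup_le fun ⟨K, hKA, hK, hK₀⟩ ⟨L, hLB, hL, hL₀⟩ => ?_
  rw [← volume_smul K hl₀, ← volume_smul L (sub_nonneg.2 hl₁)]
  calc _ ≤ volume (l • K + (1 - l) • L) :=
        brunnMinkowski_of_isCompact (hK.smul l) (hL.smul _) (hK₀.smul_set) (hL₀.smul_set)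
    _ ≤ volume (l • A + (1 - l) • B) := by gcongr

theorem prekopaLeindler_lintegral_of_isLUB {f g h : ℝ → ℝ} {l M : ℝ}
    (hl₀ : 0 < l) (hl₁ : l < 1)
    (hf₀ : ∀ x, 0 ≤ f x) (hg₀ : ∀ x, 0 ≤ g x) (hh₀ : ∀ x, 0 ≤ h x)
    (hf : AEMeasurable f) (hg : AEMeasurable g) (hh : AEMeasurable h)
    (hfM : IsLUB (range f) M) (hgM : IsLUB (range g) M)
    (hfgh : ∀ x y, f x ^ l * g y ^ (1 - l) ≤ h (l * x + (1 - l) * y)) :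
    ENNReal.ofReal l * (∫⁻ x, ENNReal.ofReal (f x))
      + ENNReal.ofReal (1 - l) * ∫⁻ x, ENNReal.ofReal (g x) ≤ ∫⁻ x, ENNReal.ofReal (h x) := by
  have hlevel : ∀ t ∈ Ioo 0 M, ENNReal.ofReal l * volume {x | t < f x}
      + ENNReal.ofReal (1 - l) * volume {x | t < g x} ≤ volume {x | t < h x} := by
    rintro t ⟨ht₀, htM⟩
    obtain ⟨_, ⟨x, rfl⟩, hx, -⟩ := hfM.exists_between htM
    obtain ⟨_, ⟨y, rfl⟩, hy, -⟩ := hgM.exists_between htM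
    refine (brunnMinkowski_smul_add_smul hl₀.le hl₁.le
      (nullMeasurableSet_lt aemeasurable_const hf) (nullMeasurableSet_lt aemeasurable_const hg)
      ⟨x, hx⟩ ⟨y, hy⟩).trans (measure_mono ?_)
    rintro _ ⟨_, ⟨u, hu, rfl⟩, _, ⟨v, hv, rfl⟩, rfl⟩
    calc t = t ^ l * t ^ (1 - l) := by rw [← rpow_add ht₀, add_sub_cancel, rpow_one]
      _ < f u ^ l * g v ^ (1 - l) := by
        have hu' : t < f u := hu
        have hv' : t < g v := hv
        gcongr
      _ ≤ h (l * u + (1 - l) * v) := hfgh u v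
  rw [lintegral_ofReal_eq_setLIntegral_Ioo_meas_lt (ae_of_all _ hf₀) hf fun x => hfM.1 ⟨x, rfl⟩,
    lintegral_ofReal_eq_setLIntegral_Ioo_meas_lt (ae_of_all _ hg₀) hg fun x => hgM.1 ⟨x, rfl⟩,
    ← lintegral_const_mul' _ _ ENNReal.ofReal_ne_top,
    ← lintegral_const_mul' _ _ ENNReal.ofReal_ne_top]
  calc _ ≤ ∫⁻ t in Ioo 0 M, ENNReal.ofReal l * volume {x | t < f x}
          + ENNReal.ofReal (1 - l) * volume {x | t < g x} := le_lintegral_add _ _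
    _ ≤ ∫⁻ t in Ioo 0 M, volume {x | t < h x} := setLIntegral_mono' measurableSet_Ioo hlevel
    _ ≤ ∫⁻ t in Ioi 0, volume {x | t < h x} := lintegral_mono_set Ioo_subset_Ioi_self
    _ = ∫⁻ x, ENNReal.ofReal (h x) :=
        (lintegral_eq_lintegral_meas_lt _ (ae_of_all _ hh₀) hh).symm

theorem prekopaLeindler_of_isLUB {f g h : ℝ → ℝ} {l M : ℝ} (hl₀ : 0 < l) (hl₁ : l < 1)
    (hf₀ : ∀ x, 0 ≤ f x) (hg₀ : ∀ x, 0 ≤ g x) (hh₀ : ∀ x, 0 ≤ h x)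
    (hf : Integrable f) (hg : Integrable g) (hh : Integrable h)
    (hfM : IsLUB (range f) M) (hgM : IsLUB (range g) M)
    (hfgh : ∀ x y, f x ^ l * g y ^ (1 - l) ≤ h (l * x + (1 - l) * y)) :
    l * (∫ x, f x) + (1 - l) * ∫ x, g x ≤ ∫ x, h x := by
  have key := prekopaLeindler_lintegral_of_isLUB hl₀ hl₁ hf₀ hg₀ hh₀ hf.aemeasurable
    hg.aemeasurable hh.aemeasurable hfM hgM hfgh
  have hl₁' : 0 ≤ 1 - l := sub_nonneg.2 hl₁.le
  rwa [← ofReal_integral_eq_lintegral_ofReal hf (ae_of_all _ hf₀),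
    ← ofReal_integral_eq_lintegral_ofReal hg (ae_of_all _ hg₀),
    ← ofReal_integral_eq_lintegral_ofReal hh (ae_of_all _ hh₀), ← ENNReal.ofReal_mul hl₀.le,
    ← ENNReal.ofReal_mul hl₁',
    ← ENNReal.ofReal_add (mul_nonneg hl₀.le (integral_nonneg hf₀))
      (mul_nonneg hl₁' (integral_nonneg hg₀)),
    ENNReal.ofReal_le_ofReal_iff (integral_nonneg hh₀)] at key

theorem prekopaLeindler_of_isLUB_of_pos {f g h : ℝ → ℝ} {l Mf Mg : ℝ}
    (hl₀ : 0 < l) (hl₁ : l < 1)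
    (hf₀ : ∀ x, 0 ≤ f x) (hg₀ : ∀ x, 0 ≤ g x) (hh₀ : ∀ x, 0 ≤ h x)
    (hf : Integrable f) (hg : Integrable g) (hh : Integrable h)
    (hMf : IsLUB (range f) Mf) (hMg : IsLUB (range g) Mg) (hMf₀ : 0 < Mf) (hMg₀ : 0 < Mg)
    (hfgh : ∀ x y, f x ^ l * g y ^ (1 - l) ≤ h (l * x + (1 - l) * y)) :
    (∫ x, f x) ^ l * (∫ x, g x) ^ (1 - l) ≤ ∫ x, h x := by
  -- rescaling `f` by `α` and `g` by `β` with `α ^ l * β ^ (1 - l) = 1` equalizes the suprema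
  -- and leaves the hypothesis on `h` unchanged
  set α := (Mg / Mf) ^ (1 - l)
  set β := (Mf / Mg) ^ l
  have hα : 0 < α := by positivity
  have hβ : 0 < β := by positivity
  have hαβ : α ^ l * β ^ (1 - l) = 1 := by
    rw [← rpow_mul (by positivity), ← rpow_mul (by positivity), mul_comm (1 - l) l,
      ← mul_rpow (by positivity) (by positivity), div_mul_div_comm, mul_comm Mg Mf,
      div_self (by positivity), one_rpow]
  have hsup : α * Mf = β * Mg := by
    simp only [α, β, div_rpow hMg₀.le hMf₀.le, div_rpow hMf₀.le hMg₀.le, rpow_sub hMf₀,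
      rpow_sub hMg₀, rpow_one]
    field_simp
  have hscaled := prekopaLeindler_of_isLUB hl₀ hl₁ (fun x => mul_nonneg hα.le (hf₀ x))
    (fun x => mul_nonneg hβ.le (hg₀ x)) hh₀ (hf.const_mul α) (hg.const_mul β) hh
    (hMf.range_const_mul hα.le) (hsup ▸ hMg.range_const_mul hβ.le) fun x y => by
      rw [mul_rpow hα.le (hf₀ x), mul_rpow hβ.le (hg₀ y), mul_mul_mul_comm, hαβ, one_mul]
      exact hfgh x y
  rw [integral_const_mul, integral_const_mul] at hscaled
  have hIf : 0 ≤ ∫ x, f x := integral_nonneg hf₀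
  have hIg : 0 ≤ ∫ x, g x := integral_nonneg hg₀
  calc (∫ x, f x) ^ l * (∫ x, g x) ^ (1 - l)
      = (α * ∫ x, f x) ^ l * (β * ∫ x, g x) ^ (1 - l) := by
        rw [mul_rpow hα.le hIf, mul_rpow hβ.le hIg, mul_mul_mul_comm, hαβ, one_mul]
    _ ≤ l * (α * ∫ x, f x) + (1 - l) * (β * ∫ x, g x) :=
        geom_mean_le_arith_mean2_weighted hl₀.le (sub_pos.2 hl₁).le (mul_nonneg hα.le hIf)
          (mul_nonneg hβ.le hIg) (add_sub_cancel l 1)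
    _ ≤ ∫ x, h x := hscaled

theorem prekopaLeindler {f g h : ℝ → ℝ} {l : ℝ} (hl₀ : 0 < l) (hl₁ : l < 1)
    (hf₀ : ∀ x, 0 ≤ f x) (hg₀ : ∀ x, 0 ≤ g x) (hh₀ : ∀ x, 0 ≤ h x)
    (hf : Integrable f) (hg : Integrable g) (hh : Integrable h)
    (hfb : BddAbove (range f)) (hgb : BddAbove (range g))
    (hfgh : ∀ x y, f x ^ l * g y ^ (1 - l) ≤ h (l * x + (1 - l) * y)) :
    (∫ x, f x) ^ l * (∫ x, g x) ^ (1 - l) ≤ ∫ x, h x := by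
  have hMf := isLUB_csSup (range_nonempty f) hfb
  have hMg := isLUB_csSup (range_nonempty g) hgb
  rcases ((hf₀ 0).trans (hMf.1 ⟨0, rfl⟩)).eq_or_lt with hMf₀ | hMf₀
  · have hf_zero : f = 0 :=
      funext fun x => le_antisymm ((hMf.1 ⟨x, rfl⟩).trans hMf₀.ge) (hf₀ x)
    simpa [hf_zero, zero_rpow hl₀.ne'] using integral_nonneg hh₀
  rcases ((hg₀ 0).trans (hMg.1 ⟨0, rfl⟩)).eq_or_lt with hMg₀ | hMg₀
  · have hg_zero : g = 0 :=
      funext fun x => le_antisymm ((hMg.1 ⟨x, rfl⟩).trans hMg₀.ge) (hg₀ x)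
    simpa [hg_zero, zero_rpow (sub_pos.2 hl₁).ne'] using integral_nonneg hh₀
  exact prekopaLeindler_of_isLUB_of_pos hl₀ hl₁ hf₀ hg₀ hh₀ hf hg hh hMf hMg hMf₀ hMg₀ hfgh

theorem rpow_mul_rpow_one_sub_le_of_le {a K s t : ℝ} (ha : 0 < a) (haK : a ≤ K) (hst : s ≤ t) :
    K ^ s * a ^ (1 - s) ≤ K ^ t * a ^ (1 - t) := by
  have hK : 0 < K := ha.trans_le haK
  have hrepr : ∀ r : ℝ, K ^ r * a ^ (1 - r) = a * (K / a) ^ r := fun r => by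
    rw [div_rpow hK.le ha.le, rpow_sub ha, rpow_one]
    field_simp
  rw [hrepr, hrepr]
  gcongr
  exact (one_le_div ha).2 haK

theorem mul_abs_sub_le_integral_of_le_on_uIcc {f : ℝ → ℝ} (hf₀ : ∀ x, 0 ≤ f x)
    (hf : Integrable f) {c u v : ℝ} (hc : ∀ y ∈ uIcc u v, c ≤ f y) :
    c * |v - u| ≤ ∫ x, f x :=
  calc c * |v - u| = ∫ _ in uIcc u v, c := by
        rw [setIntegral_const, volume_real_interval, smul_eq_mul, mul_comm]
    _ ≤ ∫ y in uIcc u v, f y :=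
        setIntegral_mono_on (integrableOn_const isCompact_uIcc.measure_lt_top.ne)
          hf.integrableOn measurableSet_uIcc hc
    _ ≤ ∫ x, f x := setIntegral_le_integral hf (ae_of_all _ hf₀)

end Real

open Real

namespace IsLogConcave

variable {f g : ℝ → ℝ}

theorem sqrt_mul_le_of_mem_segment (hf : IsLogConcave f) {a b x y : ℝ} (ha : 0 < a)
    (hb : a ≤ f b) (hx : a ≤ f x) (hy : y ∈ segment ℝ ((b + x) / 2) x) :
    √(a * f x) ≤ f y := by
  rw [segment_eq_image] at hy
  obtain ⟨θ, ⟨hθ₀, hθ₁⟩, rfl⟩ := hy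
  dsimp only
  set t := (1 + θ) / 2
  have ht : 1 / 2 ≤ t ∧ t ≤ 1 := by constructor <;> simp only [t] <;> linarith
  have hyt : (1 - θ) • ((b + x) / 2) + θ • x = t * x + (1 - t) * b := by
    simp only [t, smul_eq_mul]; ring
  rw [hyt]
  calc √(a * f x) = f x ^ (1 / 2 : ℝ) * a ^ (1 - 1 / 2 : ℝ) := by
        rw [sqrt_eq_rpow, mul_rpow ha.le (ha.le.trans hx), mul_comm]; norm_num
    _ ≤ f x ^ t * a ^ (1 - t) := rpow_mul_rpow_one_sub_le_of_le ha hx (by linarith)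
    _ ≤ f x ^ t * f b ^ (1 - t) := mul_le_mul_of_nonneg_left
        (rpow_le_rpow ha.le hb (by linarith)) (rpow_nonneg (ha.le.trans hx) _)
    _ ≤ f (t * x + (1 - t) * b) := hf x b t (by linarith) ht.2

theorem bddAbove_of_integrable (hf₀ : ∀ x, 0 ≤ f x) (hf : IsLogConcave f)
    (hfi : Integrable f) : BddAbove (range f) := by
  by_cases hpq : ∃ p q, p < q ∧ 0 < f p ∧ 0 < f q
  swap
  · have hS : {x | 0 < f x}.Subsingleton := fun p hp q hq => by
      by_contra hne
      rcases lt_or_gt_of_ne hne with h | h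
      exacts [hpq ⟨p, q, h, hp, hq⟩, hpq ⟨q, p, h, hq, hp⟩]
    refine ((hS.image f).finite.insert 0).bddAbove.mono ?_
    rintro _ ⟨x, rfl⟩
    rcases (hf₀ x).eq_or_lt with h | h
    exacts [Or.inl h.symm, Or.inr ⟨x, h, rfl⟩]
  obtain ⟨p, q, hpq, hp, hq⟩ := hpq
  set a := min (f p) (f q)
  have ha : 0 < a := lt_min hp hq
  set I := ∫ x, f x
  have hI : 0 ≤ I := integral_nonneg hf₀
  -- the half of the segment from `x` to a far point of `{p, q}` is long and `f` is large on it
  have hlarge : ∀ x, a ≤ f x → √(a * f x) * ((q - p) / 4) ≤ I := by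
    intro x hx
    obtain ⟨b, hb, hxb⟩ : ∃ b, a ≤ f b ∧ (q - p) / 2 ≤ |x - b| := by
      rcases le_total x ((p + q) / 2) with h | h
      · exact ⟨q, min_le_right _ _, le_abs.2 (Or.inr (by linarith))⟩
      · exact ⟨p, min_le_left _ _, le_abs.2 (Or.inl (by linarith))⟩
    calc √(a * f x) * ((q - p) / 4) ≤ √(a * f x) * |x - (b + x) / 2| := by
          gcongr
          rw [show x - (b + x) / 2 = (x - b) / 2 by ring, abs_div, abs_two]
          linarith
      _ ≤ I := mul_abs_sub_le_integral_of_le_on_uIcc hf₀ hfi fun y hy =>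
          hf.sqrt_mul_le_of_mem_segment ha hb hx (by rwa [segment_eq_uIcc])
  refine ⟨max a ((4 * I / (q - p)) ^ 2 / a), forall_mem_range.2 fun x => ?_⟩
  rcases le_total (f x) a with hxa | hxa
  · exact le_max_of_le_left hxa
  refine le_max_of_le_right ((le_div_iff₀ ha).2 ?_)
  rw [mul_comm, ← sqrt_le_left (div_nonneg (by positivity) (by linarith)),
    le_div_iff₀ (by linarith)]
  linarith [hlarge x hxa]

theorem mul_comp_sub (hf₀ : ∀ x, 0 ≤ f x) (hg₀ : ∀ x, 0 ≤ g x) (hf : IsLogConcave f)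
    (hg : IsLogConcave g) {l : ℝ} (hl₀ : 0 ≤ l) (hl₁ : l ≤ 1) (x y u v : ℝ) :
    (f (x - u) * g u) ^ l * (f (y - v) * g v) ^ (1 - l)
      ≤ f (l * x + (1 - l) * y - (l * u + (1 - l) * v)) * g (l * u + (1 - l) * v) := by
  rw [mul_rpow (hf₀ _) (hg₀ _), mul_rpow (hf₀ _) (hg₀ _), mul_mul_mul_comm,
    show l * x + (1 - l) * y - (l * u + (1 - l) * v) = l * (x - u) + (1 - l) * (y - v) by ring]
  exact mul_le_mul (hf _ _ l hl₀ hl₁) (hg u v l hl₀ hl₁)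
    (mul_nonneg (rpow_nonneg (hg₀ u) l) (rpow_nonneg (hg₀ v) _)) (hf₀ _)

end IsLogConcave

theorem convolution_logConcave (f g : ℝ → ℝ)
    (hf0 : ∀ x, 0 ≤ f x) (hg0 : ∀ x, 0 ≤ g x)
    (hf : IsLogConcave f) (hg : IsLogConcave g)
    (hfi : Integrable f) (hgi : Integrable g) :
    IsLogConcave (fun x => ∫ y, f (x - y) * g y) := by
  intro x y l hl₀ hl₁
  simp only [rpow_eq_pow]
  rcases hl₀.eq_or_lt with rfl | hl₀'
  · simp
  rcases hl₁.eq_or_lt with rfl | hl₁'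
  · simp
  obtain ⟨Mf, hMf⟩ := hf.bddAbove_of_integrable hf0 hfi
  obtain ⟨Mg, hMg⟩ := hg.bddAbove_of_integrable hg0 hgi
  have hF₀ : ∀ z w, 0 ≤ f (z - w) * g w := fun z w => mul_nonneg (hf0 _) (hg0 w)
  have hFi : ∀ z, Integrable fun w => f (z - w) * g w := fun z =>
    hgi.bdd_mul (hfi.comp_sub_left z).aestronglyMeasurable
      (ae_of_all _ fun w => (abs_of_nonneg (hf0 _)).trans_le (hMf ⟨_, rfl⟩))
  have hFb : ∀ z, BddAbove (range fun w => f (z - w) * g w) := fun z =>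
    ⟨Mf * Mg, forall_mem_range.2 fun w =>
      mul_le_mul (hMf ⟨_, rfl⟩) (hMg ⟨_, rfl⟩) (hg0 w) ((hf0 0).trans (hMf ⟨_, rfl⟩))⟩
  exact prekopaLeindler hl₀' hl₁' (hF₀ x) (hF₀ y) (hF₀ _) (hFi x) (hFi y) (hFi _)
    (hFb x) (hFb y) (hf.mul_comp_sub hf0 hg0 hg hl₀ hl₁ x y)
end
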